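/- Suppose Ē_τ = 0 for all 2 ≤ τ < t in the exact quadratic model, where Ē_τ is the average forgetting rate, and each H_τ is PSD symmetric. Then the vectors v_τ = ∑_{o=1}^{τ−1} H_o(θ_{τ−1} − θ_o) satisfy v_t − v_{t−1} = (∑_{o=1}^{t−2} H_o) Δ_{t−1}, and under the zero-average-forgetting hypothesis v_t = v_{t−1}. -/

import Mathlib

open Matrix

private lemma sum_mulVec_aux {n : ℕ} (s : Finset ℕ) (H : ℕ → Matrix (Fin n) (Fin n) ℝ)
    (x : Fin n → ℝ) : (∑ o ∈ s, H o) *ᵥ x = ∑ o ∈ s, (H o) *ᵥ x := by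
  induction s using Finset.cons_induction with
  | empty => simp
  | cons a s ha ih => rw [Finset.sum_cons, Finset.sum_cons, Matrix.add_mulVec, ih]

/-- In the exact quadratic model with PSD symmetric Hessians, the interaction
vectors `v_s = ∑_{o=1}^{s−1} H_o (θ_{s−1} − θ_o)` satisfy
`v_t − v_{t−1} = (∑_{o=1}^{t−2} H_o) Δ_{t−1}`, and under zero average
forgetting (`Ē_τ = 0` for all `2 ≤ τ < t`) the interaction vector is
constant: `v_t = v_{t−1}`. -/
theorem interaction_vector_constant {n : ℕ}
    (H : ℕ → Matrix (Fin n) (Fin n) ℝ)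
    (hsymm : ∀ τ, (H τ).IsSymm)
    (hpsd : ∀ τ, (H τ).PosSemidef)
    (Δ : ℕ → Fin n → ℝ)
    (θ : ℕ → Fin n → ℝ)
    (hθ : ∀ j, θ j = θ 0 + ∑ o ∈ Finset.Icc 1 j, Δ o)
    (E : ℕ → (Fin n → ℝ) → ℝ)
    (hE : ∀ τ x, E τ x = (1 / 2) * ((x - θ τ) ⬝ᵥ (H τ).mulVec (x - θ τ)))
    (Ebar : ℕ → ℝ)
    (hEbar : ∀ s, Ebar s = (1 / ((s : ℝ) - 1)) * ∑ τ ∈ Finset.Ico 1 s, E τ (θ s))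
    (v : ℕ → Fin n → ℝ)
    (hv : ∀ s, v s = ∑ o ∈ Finset.Ico 1 s, (H o).mulVec (θ (s - 1) - θ o))
    (t : ℕ) (ht : 2 ≤ t)
    (hzero : ∀ τ, 2 ≤ τ → τ < t → Ebar τ = 0) :
    v t - v (t - 1) = (∑ o ∈ Finset.Ico 1 (t - 1), H o).mulVec (Δ (t - 1)) ∧
    v t = v (t - 1) := by
  obtain ⟨k, rfl⟩ : ∃ k, t = k + 2 := ⟨t - 2, by omega⟩
  set t := k + 2
  -- key: for 2 ≤ τ < t and 1 ≤ o < τ, H o *ᵥ (θ τ - θ o) = 0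
  have hkey : ∀ τ o, 2 ≤ τ → τ < t → 1 ≤ o → o < τ →
      (H o) *ᵥ (θ τ - θ o) = 0 := by
    intro τ o h2 hlt h1 ho
    have hz := hzero τ h2 hlt
    rw [hEbar] at hz
    have hτpos : (0:ℝ) < (τ:ℝ) - 1 := by
      have : (2:ℝ) ≤ (τ:ℝ) := by exact_mod_cast h2
      linarith
    have hne : (1:ℝ) / ((τ:ℝ) - 1) ≠ 0 := by positivity
    have hsum0 : ∑ τ' ∈ Finset.Ico 1 τ, E τ' (θ τ) = 0 := by
      rcases mul_eq_zero.mp hz with h | h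
      · exact absurd h hne
      · exact h
    have hnonneg : ∀ o' ∈ Finset.Ico 1 τ, 0 ≤ E o' (θ τ) := by
      intro o' _
      rw [hE]
      have h0 := (hpsd o').dotProduct_mulVec_nonneg (θ τ - θ o')
      simp only [star_trivial] at h0
      have : (0:ℝ) ≤ (θ τ - θ o') ⬝ᵥ (H o') *ᵥ (θ τ - θ o') := by
        simpa using h0
      linarith
    have hterm : E o (θ τ) = 0 :=
      (Finset.sum_eq_zero_iff_of_nonneg hnonneg).mp hsum0 o
        (Finset.mem_Ico.mpr ⟨h1, ho⟩)
    rw [hE] at hterm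
    have hdot : (θ τ - θ o) ⬝ᵥ (H o) *ᵥ (θ τ - θ o) = 0 := by linarith
    have := ((hpsd o).dotProduct_mulVec_zero_iff (θ τ - θ o)).mp (by simpa using hdot)
    exact this
  -- θ (k+1) - θ k = Δ (k+1)
  have hΔ : θ (k + 1) - θ k = Δ (k + 1) := by
    rw [hθ (k+1), hθ k]
    have : Finset.Icc 1 (k+1) = insert (k+1) (Finset.Icc 1 k) := by
      ext x; simp [Finset.mem_Icc]; omega
    rw [this, Finset.sum_insert (by simp)]
    abel
  -- part one
  have hone : v t - v (t - 1) =
      (∑ o ∈ Finset.Ico 1 (t - 1), H o).mulVec (Δ (t - 1)) := by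
    have hvt : v t = ∑ o ∈ Finset.Ico 1 (k+1), (H o) *ᵥ (θ (k+1) - θ o) := by
      rw [hv]
      show ∑ o ∈ Finset.Ico 1 (k+2), (H o) *ᵥ (θ (k+1) - θ o) = _
      rw [Finset.sum_Ico_succ_top (by omega)]
      simp
    have hvt1 : v (t - 1) = ∑ o ∈ Finset.Ico 1 (k+1), (H o) *ᵥ (θ k - θ o) := by
      rw [hv]; rfl
    show v t - v (t-1) = (∑ o ∈ Finset.Ico 1 (k+1), H o) *ᵥ (Δ (k+1))
    rw [hvt, hvt1, ← Finset.sum_sub_distrib, sum_mulVec_aux]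
    refine Finset.sum_congr rfl fun o _ => ?_
    rw [← mulVec_sub, ← hΔ]
    congr 1
    abel
  refine ⟨hone, ?_⟩
  -- part two: each H o *ᵥ Δ (k+1) = 0 for o ∈ Ico 1 (k+1)
  have hzeroΔ : ∀ o ∈ Finset.Ico 1 (k+1), (H o) *ᵥ (Δ (k+1)) = 0 := by
    intro o ho
    rw [Finset.mem_Ico] at ho
    have e1 : (H o) *ᵥ (θ (k+1) - θ o) = 0 :=
      hkey (k+1) o (by omega) (by omega) ho.1 (by omega)
    have e2 : (H o) *ᵥ (θ k - θ o) = 0 := by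
      rcases eq_or_lt_of_le (Nat.lt_succ_iff.mp ho.2) with h | h
      · rw [h]; simp
      · exact hkey k o (by omega) (by omega) ho.1 h
    have : (H o) *ᵥ ((θ (k+1) - θ o) - (θ k - θ o)) = 0 := by
      rw [mulVec_sub, e1, e2]; simp
    rw [show (θ (k+1) - θ o) - (θ k - θ o) = θ (k+1) - θ k by abel, hΔ] at this
    exact this
  have : (∑ o ∈ Finset.Ico 1 (t - 1), H o).mulVec (Δ (t - 1)) = 0 := by
    show (∑ o ∈ Finset.Ico 1 (k+1), H o) *ᵥ (Δ (k+1)) = 0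
    rw [sum_mulVec_aux]
    exact Finset.sum_eq_zero hzeroΔ
  have h := hone
  rw [this] at h
  exact sub_eq_zero.mp h
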